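/- arXiv:1803.03457 — 6 statements merged into one kernel-verified Lean document; each statement's English description precedes it below -/
import Mathlib

section
/- Let n = 4k+2 with k > 0, fix i ∈ [n], and let S(i) consist of all subsets of [n] of odd size at least 2k+3 together with all subsets of size 2k+1 containing i. Then S(i) is a pairwise intersecting family of odd-size subsets, and |S(i)| = 2^(n-2). -/
/-!
Since `n = 4k+2` is even, complementation in `[n]` maps odd sets to odd sets, sending size `j`
to `n - j`. `S(i)` contains exactly one set of each complementary pair of odd sets: the larger one
when the sizes are `≥ 2k+3` and `≤ 2k-1`, and the one containing `i` when both have size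
`2k+1 = n/2`. Hence `|S(i)|` is half the number `2^(n-1)` of odd subsets of `[n]`.
Two disjoint members would have sizes summing to at most `n`, so both would have size `2k+1`
and contain `i`.
-/

open Finset

def Sfam (k i : ℕ) : Finset (Finset ℕ) :=
  ((Finset.Icc 1 (4 * k + 2)).powerset).filter
    (fun A => (Odd A.card ∧ 2 * k + 3 ≤ A.card) ∨ (A.card = 2 * k + 1 ∧ i ∈ A))

namespace Finset

variable {α : Type*}

theorem two_mul_card_powerset_filter_odd {s : Finset α} (hs : s.Nonempty) :
    2 * #{A ∈ s.powerset | Odd #A} = 2 ^ #s := by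
  have hsum := sum_powerset_neg_one_pow_card_of_nonempty hs
  simp only [neg_one_pow_eq_ite, sum_ite, sum_const, nsmul_eq_mul, mul_one, mul_neg,
    Nat.not_even_iff_odd] at hsum
  have hsplit := card_filter_add_card_filter_not (s := s.powerset) (fun A => Even #A)
  simp only [Nat.not_even_iff_odd, card_powerset] at hsplit
  omega

variable [DecidableEq α]

theorem two_mul_card_of_mem_iff_sdiff_notMem {s : Finset α} {F S : Finset (Finset α)}
    (hF : ∀ A ∈ F, A ⊆ s ∧ s \ A ∈ F) (hSF : S ⊆ F) (hS : ∀ A ∈ F, A ∈ S ↔ s \ A ∉ S) :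
    2 * #S = #F := by
  have hcompl : #(F \ S) = #S := by
    refine card_nbij' (s \ ·) (s \ ·) ?_ ?_ ?_ ?_
    · intro A hA
      simp only [coe_sdiff, Set.mem_sdiff, mem_coe] at hA
      exact not_not.1 (mt (hS A hA.1).2 hA.2)
    · intro B hB
      simp only [coe_sdiff, Set.mem_sdiff, mem_coe] at hB ⊢
      exact ⟨(hF B (hSF hB)).2, (hS B (hSF hB)).1 hB⟩
    · intro A hA
      exact sdiff_sdiff_eq_self (hF A (mem_sdiff.1 hA).1).1
    · intro B hB
      exact sdiff_sdiff_eq_self (hF B (hSF hB)).1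
  have := card_sdiff_add_card_eq_card hSF
  omega

theorem sdiff_mem_powerset_filter_odd {s A : Finset α} (hs : Even #s)
    (hA : A ∈ {A ∈ s.powerset | Odd #A}) : s \ A ∈ {A ∈ s.powerset | Odd #A} := by
  rw [mem_filter, mem_powerset] at hA ⊢
  exact ⟨sdiff_subset, card_sdiff_of_subset hA.1 ▸ Nat.Even.sub_odd (card_le_card hA.1) hs hA.2⟩

end Finset

theorem Sfam_subset_powerset_filter_odd (k i : ℕ) :
    Sfam k i ⊆ {A ∈ (Icc 1 (4 * k + 2)).powerset | Odd #A} := by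
  intro A hA
  simp only [Sfam, mem_filter] at hA ⊢
  refine ⟨hA.1, ?_⟩
  rcases hA.2 with ⟨hodd, _⟩ | ⟨hcard, _⟩
  · exact hodd
  · exact hcard ▸ odd_two_mul_add_one k

theorem mem_Sfam_iff_sdiff_notMem {k i : ℕ} (hi : i ∈ Icc 1 (4 * k + 2)) {A : Finset ℕ}
    (hA : A ∈ {A ∈ (Icc 1 (4 * k + 2)).powerset | Odd #A}) :
    A ∈ Sfam k i ↔ Icc 1 (4 * k + 2) \ A ∉ Sfam k i := by
  rw [mem_filter, mem_powerset] at hA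
  have hcard : #(Icc 1 (4 * k + 2) \ A) = 4 * k + 2 - #A := by
    rw [card_sdiff_of_subset hA.1]; simp
  have hle := card_le_card hA.1
  simp only [Nat.card_Icc] at hle
  have hodd := Nat.odd_iff.1 hA.2
  simp only [Sfam, mem_filter, mem_powerset, sdiff_subset, true_and, hA.1, hcard, mem_sdiff, hi,
    Nat.odd_iff]
  by_cases hiA : i ∈ A <;> simp only [hiA, not_true_eq_false, not_false_eq_true, and_true,
    and_false, or_false] <;> omega

theorem Sfam_intersecting (k i : ℕ) : ∀ A ∈ Sfam k i, ∀ B ∈ Sfam k i, (A ∩ B).Nonempty := by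
  intro A hA B hB
  simp only [Sfam, mem_filter, mem_powerset] at hA hB
  by_contra hAB
  have hdisj : Disjoint A B := disjoint_iff_inter_eq_empty.2 (not_nonempty_iff_eq_empty.1 hAB)
  have hcard : #A + #B ≤ 4 * k + 2 := by
    rw [← card_union_of_disjoint hdisj]
    simpa using card_le_card (union_subset hA.1 hB.1)
  rcases hA.2 with ⟨_, hA⟩ | ⟨hA, hiA⟩ <;> rcases hB.2 with ⟨_, hB⟩ | ⟨hB, hiB⟩
  any_goals omega
  exact hAB ⟨i, mem_inter.2 ⟨hiA, hiB⟩⟩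

theorem Sfam_intersecting_and_card_general (k i : ℕ)
    (hi : i ∈ Finset.Icc 1 (4 * k + 2)) :
    (∀ A ∈ Sfam k i, ∀ B ∈ Sfam k i, (A ∩ B).Nonempty) ∧
    (Sfam k i).card = 2 ^ (4 * k) := by
  refine ⟨Sfam_intersecting k i, ?_⟩
  have hodd_count := two_mul_card_powerset_filter_odd (s := Icc 1 (4 * k + 2)) ⟨1, by simp⟩
  have hhalf := two_mul_card_of_mem_iff_sdiff_notMem
    (fun A hA => ⟨mem_powerset.1 (mem_filter.1 hA).1,
      sdiff_mem_powerset_filter_odd (by rw [Nat.card_Icc]; exact ⟨2 * k + 1, by omega⟩) hA⟩)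
    (Sfam_subset_powerset_filter_odd k i) (fun A hA => mem_Sfam_iff_sdiff_notMem hi hA)
  rw [← hhalf, Nat.card_Icc, Nat.add_sub_cancel, pow_succ, pow_succ] at hodd_count
  omega

theorem Sfam_intersecting_and_card (k i : ℕ) (hk : 0 < k)
    (hi : i ∈ Finset.Icc 1 (4 * k + 2)) :
    (∀ A ∈ Sfam k i, ∀ B ∈ Sfam k i, (A ∩ B).Nonempty) ∧
    (Sfam k i).card = 2 ^ (4 * k) :=
  Sfam_intersecting_and_card_general k i hi
end

section
/- Let n = 4k+2 with k > 0 and S(i) as above. Then S(i) is maximal: for every odd-size subset A ⊆ [n] with A ∉ S(i), there exists B ∈ S(i) with A ∩ B = ∅. -/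
theorem Sfam_maximal (k i : ℕ) (hk : 0 < k) (hi : i ∈ Finset.Icc 1 (4 * k + 2)) :
    ∀ A : Finset ℕ, A ⊆ Finset.Icc 1 (4 * k + 2) → Odd A.card → A ∉ Sfam k i →
      ∃ B ∈ Sfam k i, A ∩ B = ∅ := by
  intro A hsub hodd hnot
  set B : Finset ℕ := (Finset.Icc 1 (4 * k + 2)) \ A with hB
  have hBsub : B ⊆ Finset.Icc 1 (4 * k + 2) := Finset.sdiff_subset
  have hcardIcc : (Finset.Icc 1 (4 * k + 2)).card = 4 * k + 2 := by
    rw [Nat.card_Icc]; omega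
  have hAcard : A.card ≤ 4 * k + 2 := by
    have := Finset.card_le_card hsub
    omega
  have hBcard : B.card = 4 * k + 2 - A.card := by
    rw [hB, Finset.card_sdiff_of_subset hsub, hcardIcc]
  have hdisj : A ∩ B = ∅ := by
    rw [hB, Finset.inter_sdiff_self]
  -- extract failure of conditions
  have hcond : ¬((Odd A.card ∧ 2 * k + 3 ≤ A.card) ∨ (A.card = 2 * k + 1 ∧ i ∈ A)) := by
    intro h
    exact hnot (Finset.mem_filter.mpr ⟨Finset.mem_powerset.mpr hsub, h⟩)
  push_neg at hcond
  obtain ⟨h1, h2⟩ := hcond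
  have hle : A.card ≤ 2 * k + 2 := by
    have := h1 hodd
    omega
  have hle' : A.card ≤ 2 * k + 1 := by
    rcases hodd with ⟨m, hm⟩
    omega
  refine ⟨B, ?_, hdisj⟩
  rw [Sfam, Finset.mem_filter]
  refine ⟨Finset.mem_powerset.mpr hBsub, ?_⟩
  rcases eq_or_lt_of_le hle' with heq | hlt
  · right
    have hiB : i ∈ B := by
      rw [hB, Finset.mem_sdiff]
      exact ⟨hi, h2 heq⟩
    constructor
    · rw [hBcard]; omega
    · exact hiB
  · left
    obtain ⟨m, hm⟩ := id hodd
    constructor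
    · rw [hBcard]
      exact Nat.Even.sub_odd hAcard ⟨2 * k + 1, by ring⟩ hodd
    · rw [hBcard]; omega
end

section
/- Let k ≥ 2, n = 4k+7, m = 2k+3, and let A_m = B_1 ∪ ... ∪ B_10 be the family of m-element subsets of [n] built from the shifted Fano system on {4k+1,...,4k+7}. Then A_m is pairwise intersecting: any two members of A_m have nonempty intersection. -/
def fanoShift (k : ℕ) : Finset (Finset ℕ) :=
  { {4*k+1, 4*k+2, 4*k+5}, {4*k+1, 4*k+3, 4*k+6}, {4*k+1, 4*k+4, 4*k+7},
    {4*k+2, 4*k+3, 4*k+7}, {4*k+3, 4*k+4, 4*k+5}, {4*k+5, 4*k+6, 4*k+7},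
    {4*k+2, 4*k+4, 4*k+6} }

/-- The Fano-based family `A_m = B₁ ∪ ⋯ ∪ B₁₀` of `(2k+3)`-subsets of `[4k+7]`. -/
def Am (k : ℕ) : Set (Finset ℕ) :=
  {S | (∃ T ∈ fanoShift k, ∃ S' : Finset ℕ,
          S' ⊆ Finset.Icc 1 (4*k) ∧ S'.card = 2*k ∧ S = T ∪ S')
    ∨ (∃ S' S'' : Finset ℕ, S' ⊆ Finset.Icc (4*k+1) (4*k+7) ∧ S'.card = 2 ∧
          S'' ⊆ Finset.Icc 1 (4*k) ∧ S''.card = 2*k+1 ∧ S = S' ∪ S'')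
    ∨ (∃ S' S'' : Finset ℕ, S' ⊆ Finset.Icc (4*k+1) (4*k+7) ∧ S'.card = 1 ∧
          S'' ⊆ Finset.Icc 1 (4*k) ∧ S''.card = 2*k+2 ∧ S = S' ∪ S'')
    ∨ (S ⊆ Finset.Icc 1 (4*k) ∧ S.card = 2*k+3)}

set_option maxHeartbeats 2000000 in
lemma fano_inter (k : ℕ) : ∀ T₁ ∈ fanoShift k, ∀ T₂ ∈ fanoShift k,
    (T₁ ∩ T₂).Nonempty := by
  intro T₁ h₁ T₂ h₂
  simp only [fanoShift, Finset.mem_insert, Finset.mem_singleton] at h₁ h₂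
  rcases h₁ with rfl|rfl|rfl|rfl|rfl|rfl|rfl <;>
    rcases h₂ with rfl|rfl|rfl|rfl|rfl|rfl|rfl <;>
    first
    | (refine ⟨4*k+1, ?_⟩; simp; done)
    | (refine ⟨4*k+2, ?_⟩; simp; done)
    | (refine ⟨4*k+3, ?_⟩; simp; done)
    | (refine ⟨4*k+4, ?_⟩; simp; done)
    | (refine ⟨4*k+5, ?_⟩; simp; done)
    | (refine ⟨4*k+6, ?_⟩; simp; done)
    | (refine ⟨4*k+7, ?_⟩; simp; done)

/-- Structure lemma: each member of `Am k` either contains a Fano triple together with a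
`2k`-element low part, or contains a low part of size at least `2k+1`. -/
lemma mem_Am_cases (k : ℕ) (S : Finset ℕ) (h : S ∈ Am k) :
    (∃ T ∈ fanoShift k, T ⊆ S ∧
        ∃ S' : Finset ℕ, S' ⊆ Finset.Icc 1 (4*k) ∧ S'.card = 2*k ∧ S' ⊆ S)
    ∨ (∃ S' : Finset ℕ, S' ⊆ Finset.Icc 1 (4*k) ∧ 2*k+1 ≤ S'.card ∧ S' ⊆ S) := by
  rcases h with ⟨T, hT, S', hsub, hcard, rfl⟩ | ⟨S', S'', _, _, hsub, hcard, rfl⟩ |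
    ⟨S', S'', _, _, hsub, hcard, rfl⟩ | ⟨hsub, hcard⟩
  · exact Or.inl ⟨T, hT, Finset.subset_union_left, S', hsub, hcard,
      Finset.subset_union_right⟩
  · exact Or.inr ⟨S'', hsub, by omega, Finset.subset_union_right⟩
  · exact Or.inr ⟨S'', hsub, by omega, Finset.subset_union_right⟩
  · exact Or.inr ⟨S, hsub, by omega, le_refl _⟩

theorem Am_intersecting (k : ℕ) (hk : 2 ≤ k) :
    ∀ S₁ ∈ Am k, ∀ S₂ ∈ Am k, (S₁ ∩ S₂).Nonempty := by
  intro S₁ h₁ S₂ h₂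
  by_contra hne
  rw [Finset.not_nonempty_iff_eq_empty, ← Finset.disjoint_iff_inter_eq_empty] at hne
  -- helper: two disjoint low parts of total card > 4k inside Icc 1 (4k) is impossible
  have key : ∀ A B : Finset ℕ, A ⊆ Finset.Icc 1 (4*k) → B ⊆ Finset.Icc 1 (4*k) →
      A ⊆ S₁ → B ⊆ S₂ → A.card + B.card ≤ 4*k := by
    intro A B hA hB hAS hBS
    have hd : Disjoint A B := hne.mono hAS hBS
    have h1 : (A ∪ B).card = A.card + B.card := Finset.card_union_of_disjoint hd
    have h2 : (A ∪ B).card ≤ (Finset.Icc 1 (4*k)).card :=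
      Finset.card_le_card (Finset.union_subset hA hB)
    have h3 : (Finset.Icc 1 (4*k)).card = 4*k := by
      rw [Nat.card_Icc]; omega
    omega
  rcases mem_Am_cases k S₁ h₁ with ⟨T₁, hT₁, hT₁S, A, hA, hAc, hAS⟩ |
      ⟨A, hA, hAc, hAS⟩ <;>
    rcases mem_Am_cases k S₂ h₂ with ⟨T₂, hT₂, hT₂S, B, hB, hBc, hBS⟩ |
      ⟨B, hB, hBc, hBS⟩
  · -- both Fano triples: triples intersect
    obtain ⟨x, hx⟩ := fano_inter k T₁ hT₁ T₂ hT₂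
    rw [Finset.mem_inter] at hx
    exact (Finset.disjoint_left.mp hne (hT₁S hx.1)) (hT₂S hx.2)
  · have := key A B hA hB hAS hBS; omega
  · have := key A B hA hB hAS hBS; omega
  · have := key A B hA hB hAS hBS; omega
end

section
/- Let k ≥ 2, n = 4k+7, m = 2k+3 and A_m = B_1 ∪ ... ∪ B_10 as above. Then A_m is maximal among intersecting families of m-element subsets of [n]: for every m-element subset S of [n] with S ∉ A_m, there exists S₁ ∈ A_m with S ∩ S₁ = ∅. -/
/-!
Let `A` be the trace of `S` on the seven Fano points. If `|A| ≤ 2` or `A` is a Fano line, then `S`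
already lies in `A_m`. Otherwise either `|A| = 3`, and since a triple of the Fano plane that is not
a line misses some line entirely, the complement of `S` holds a line together with `2k` points of
`[4k]`; or `|A| ≥ 4`, and the complement holds `min 2 (7 - |A|)` Fano points and enough points of
`[4k]` to complete a member of `B₈ ∪ B₉ ∪ B₁₀`.
-/

open Finset

variable {k : ℕ}

lemma fanoShift_eq_image (k : ℕ) :
    fanoShift k = (fanoShift 0).image (image (4 * k + ·)) := by
  simp [fanoShift, image_insert, image_singleton]

lemma card_eq_three_of_mem_fanoShift {T : Finset ℕ} (hT : T ∈ fanoShift k) : #T = 3 := by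
  obtain ⟨T₀, hT₀, rfl⟩ := mem_image.mp (fanoShift_eq_image k ▸ hT)
  rw [card_image_of_injective _ (add_right_injective _)]
  exact (by decide : ∀ T ∈ fanoShift 0, #T = 3) T₀ hT₀

lemma exists_fanoShift_zero_subset_compl :
    ∀ A ∈ powersetCard 3 (Icc 1 7), A ∉ fanoShift 0 → ∃ T ∈ fanoShift 0, T ⊆ Icc 1 7 \ A := by
  decide

lemma exists_fanoShift_subset_compl {A : Finset ℕ} (hA : A ⊆ Icc (4*k+1) (4*k+7))
    (hcard : #A = 3) (hline : A ∉ fanoShift k) :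
    ∃ T ∈ fanoShift k, T ⊆ Icc (4*k+1) (4*k+7) \ A := by
  have hinj : Function.Injective (4 * k + ·) := add_right_injective _
  have hIcc : Icc (4*k+1) (4*k+7) = (Icc 1 7).image (4 * k + ·) := by
    rw [image_add_left_Icc]
  obtain ⟨A₀, hA₀, rfl⟩ := subset_image_iff.mp (hIcc ▸ hA)
  rw [card_image_of_injective _ hinj] at hcard
  have hline₀ : A₀ ∉ fanoShift 0 := fun h =>
    hline (fanoShift_eq_image k ▸ mem_image_of_mem _ h)
  obtain ⟨T₀, hT₀, hT₀A₀⟩ :=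
    exists_fanoShift_zero_subset_compl A₀ (mem_powersetCard.mpr ⟨hA₀, hcard⟩) hline₀
  refine ⟨T₀.image (4 * k + ·), fanoShift_eq_image k ▸ mem_image_of_mem _ hT₀, ?_⟩
  rw [hIcc, ← image_sdiff _ _ hinj]
  exact image_subset_image hT₀A₀

lemma union_mem_Am {E F : Finset ℕ} (hE : E ⊆ Icc (4*k+1) (4*k+7)) (hF : F ⊆ Icc 1 (4*k))
    (hcard : #E + #F = 2*k+3) (hEF : #E ≤ 2 ∨ E ∈ fanoShift k) : E ∪ F ∈ Am k := by
  rcases hEF with hE2 | hline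
  · interval_cases hE0 : #E
    · rw [card_eq_zero.mp hE0, empty_union]
      exact Or.inr (Or.inr (Or.inr ⟨hF, by omega⟩))
    · exact Or.inr (Or.inr (Or.inl ⟨E, F, hE, hE0, hF, by omega, rfl⟩))
    · exact Or.inr (Or.inl ⟨E, F, hE, hE0, hF, by omega, rfl⟩)
  · have := card_eq_three_of_mem_fanoShift hline
    exact Or.inl ⟨E, hline, F, hF, by omega, rfl⟩

lemma inter_Icc_union_inter_Icc {S : Finset ℕ} {a b c : ℕ} (hS : S ⊆ Icc a c) :
    S ∩ Icc (b+1) c ∪ S ∩ Icc a b = S := by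
  rw [← inter_union_distrib_left, inter_eq_left]
  intro x hx
  have := mem_Icc.mp (hS hx)
  simp only [mem_union, mem_Icc]
  omega

lemma card_inter_Icc_add_card_inter_Icc {S : Finset ℕ} {a b c : ℕ} (hS : S ⊆ Icc a c) :
    #(S ∩ Icc (b+1) c) + #(S ∩ Icc a b) = #S := by
  conv_rhs => rw [← inter_Icc_union_inter_Icc (b := b) hS]
  refine (card_union_of_disjoint ?_).symm
  refine disjoint_left.mpr fun x hx hx' => ?_
  have := mem_Icc.mp (mem_inter.mp hx).2
  have := mem_Icc.mp (mem_inter.mp hx').2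
  omega

lemma mem_Am_of_inter {S : Finset ℕ} (hS : S ⊆ Icc 1 (4*k+7)) (hcard : #S = 2*k+3)
    (hA : #(S ∩ Icc (4*k+1) (4*k+7)) ≤ 2 ∨ S ∩ Icc (4*k+1) (4*k+7) ∈ fanoShift k) :
    S ∈ Am k := by
  rw [← inter_Icc_union_inter_Icc (b := 4*k) hS]
  exact union_mem_Am inter_subset_right inter_subset_right
    (by rw [card_inter_Icc_add_card_inter_Icc (b := 4*k) hS, hcard]) hA

lemma exists_parts_of_not_mem_Am {S : Finset ℕ} (hS : S ⊆ Icc 1 (4*k+7)) (hcard : #S = 2*k+3)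
    (hnot : S ∉ Am k) :
    ∃ E ⊆ Icc (4*k+1) (4*k+7) \ S, ∃ F ⊆ Icc 1 (4*k) \ S,
      #E + #F = 2*k+3 ∧ (#E ≤ 2 ∨ E ∈ fanoShift k) := by
  have hsplit := card_inter_Icc_add_card_inter_Icc (b := 4*k) hS
  have hhigh : #(Icc (4*k+1) (4*k+7) \ S) = 7 - #(S ∩ Icc (4*k+1) (4*k+7)) := by
    rw [card_sdiff, Nat.card_Icc]; omega
  have hlow : #(Icc 1 (4*k) \ S) = 4*k - #(S ∩ Icc 1 (4*k)) := by
    rw [card_sdiff, Nat.card_Icc]; omega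
  have hlow_le : #(S ∩ Icc 1 (4*k)) ≤ 4*k := by
    simpa using card_le_card (inter_subset_right (s₁ := S) (s₂ := Icc 1 (4*k)))
  suffices ∃ E ⊆ Icc (4*k+1) (4*k+7) \ S, (#E ≤ 2 ∨ E ∈ fanoShift k) ∧
      #E ≤ 2*k+3 ∧ 2*k+3 ≤ #E + #(Icc 1 (4*k) \ S) by
    obtain ⟨E, hE, hEF, hE_le, hroom⟩ := this
    obtain ⟨F, hF, hFcard⟩ := exists_subset_card_eq (s := Icc 1 (4*k) \ S) (n := 2*k+3 - #E)
      (by omega)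
    exact ⟨E, hE, F, hF, by omega, hEF⟩
  have h3 : 3 ≤ #(S ∩ Icc (4*k+1) (4*k+7)) := by
    by_contra h
    exact hnot (mem_Am_of_inter hS hcard (Or.inl (by omega)))
  rcases h3.eq_or_lt with hthree | hfour
  · have hline : S ∩ Icc (4*k+1) (4*k+7) ∉ fanoShift k := fun h =>
      hnot (mem_Am_of_inter hS hcard (Or.inr h))
    obtain ⟨T, hT, hTS⟩ := exists_fanoShift_subset_compl inter_subset_right hthree.symm hline
    have := card_eq_three_of_mem_fanoShift hT
    refine ⟨T, ?_, Or.inr hT, by omega, by omega⟩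
    rwa [sdiff_inter_self_right] at hTS
  · obtain ⟨E, hE, hEcard⟩ := exists_subset_card_eq
      (s := Icc (4*k+1) (4*k+7) \ S) (n := min 2 (7 - #(S ∩ Icc (4*k+1) (4*k+7)))) (by omega)
    exact ⟨E, hE, Or.inl (by omega), by omega, by omega⟩

theorem Am_maximal_general (k : ℕ) :
    ∀ S : Finset ℕ, S ⊆ Finset.Icc 1 (4*k+7) → S.card = 2*k+3 → S ∉ Am k →
      ∃ S₁ ∈ Am k, S ∩ S₁ = ∅ := by
  intro S hS hcard hnot
  obtain ⟨E, hE, F, hF, hEF, hline⟩ := exists_parts_of_not_mem_Am hS hcard hnot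
  refine ⟨E ∪ F, union_mem_Am (hE.trans sdiff_subset) (hF.trans sdiff_subset) hEF hline, ?_⟩
  exact disjoint_iff_inter_eq_empty.mp
    (disjoint_union_right.mpr ⟨disjoint_sdiff.mono_right hE, disjoint_sdiff.mono_right hF⟩)

theorem Am_maximal (k : ℕ) (hk : 2 ≤ k) :
    ∀ S : Finset ℕ, S ⊆ Finset.Icc 1 (4*k+7) → S.card = 2*k+3 → S ∉ Am k →
      ∃ S₁ ∈ Am k, S ∩ S₁ = ∅ :=
  Am_maximal_general k
end

section
/- The cardinality of A_m equals 7·C(4k,2k) + 21·C(4k,2k+1) + 7·C(4k,2k+2) + C(4k,2k+3), and the ratio |A_m| / C(4k+6, 2k+2) converges to 36/64 = 0.5625 as k → ∞. -/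
lemma fano_eq (k : ℕ) : fanoShift k = (fanoShift 0).image (Finset.image (fun x => 4*k + x)) := by
  simp [fanoShift, Finset.image_insert, Finset.image_singleton]

lemma fano_card (k : ℕ) : (fanoShift k).card = 7 := by
  rw [fano_eq, Finset.card_image_of_injective _ (Finset.image_injective (add_right_injective (4*k)))]
  decide

lemma fano_mem_card {k : ℕ} {T : Finset ℕ} (h : T ∈ fanoShift k) : T.card = 3 := by
  rw [fano_eq] at h
  obtain ⟨T0, hT0, rfl⟩ := Finset.mem_image.mp h
  clear h
  rw [Finset.card_image_of_injective _ (add_right_injective (4*k))]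
  revert hT0; revert T0; decide

lemma fano_mem_sub {k : ℕ} {T : Finset ℕ} (h : T ∈ fanoShift k) :
    T ⊆ Finset.Icc (4*k+1) (4*k+7) := by
  rw [fano_eq] at h
  obtain ⟨T0, hT0, rfl⟩ := Finset.mem_image.mp h
  clear h
  intro x hx
  obtain ⟨y, hy, rfl⟩ := Finset.mem_image.mp hx
  clear hx
  have : 1 ≤ y ∧ y ≤ 7 := by
    have : ∀ T0 ∈ fanoShift 0, T0 ⊆ Finset.Icc 1 7 := by decide
    have := this _ hT0
    have := this hy; simp [Finset.mem_Icc] at this; exact this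
  simp [Finset.mem_Icc]; omega
section
variable {k : ℕ}

lemma split_top {k : ℕ} {T S' : Finset ℕ} (hT : T ⊆ Finset.Icc (4*k+1) (4*k+7))
    (hS : S' ⊆ Finset.Icc 1 (4*k)) :
    (T ∪ S').filter (fun x => 4*k+1 ≤ x) = T := by
  ext x
  simp only [Finset.mem_filter, Finset.mem_union]
  constructor
  · rintro ⟨h | h, hx⟩
    · exact h
    · have := Finset.mem_Icc.mp (hS h); omega
  · intro h
    exact ⟨Or.inl h, (Finset.mem_Icc.mp (hT h)).1⟩

-- top-filter cardinality of members of an image part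
lemma filter_card_of_mem {k t m : ℕ} {A : Finset (Finset ℕ)}
    (hA : ∀ T ∈ A, T ⊆ Finset.Icc (4*k+1) (4*k+7)) (hAc : ∀ T ∈ A, T.card = t)
    {S : Finset ℕ}
    (h : S ∈ (A ×ˢ (Finset.Icc 1 (4*k)).powersetCard m).image fun p => p.1 ∪ p.2) :
    (S.filter (fun x => 4*k+1 ≤ x)).card = t := by
  obtain ⟨⟨T, S'⟩, hp, rfl⟩ := Finset.mem_image.mp h
  simp only [Finset.mem_product, Finset.mem_powersetCard] at hp
  rw [split_top (hA _ hp.1) hp.2.1]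
  exact hAc _ hp.1

lemma filter_card_bot {k : ℕ} {S : Finset ℕ} (h : S ⊆ Finset.Icc 1 (4*k)) :
    (S.filter (fun x => 4*k+1 ≤ x)).card = 0 := by
  rw [Finset.card_eq_zero, Finset.filter_eq_empty_iff]
  intro x hx
  have := Finset.mem_Icc.mp (h hx); omega

lemma part_card {k m : ℕ} {A : Finset (Finset ℕ)}
    (hA : ∀ T ∈ A, T ⊆ Finset.Icc (4*k+1) (4*k+7)) :
    ((A ×ˢ (Finset.Icc 1 (4*k)).powersetCard m).image fun p => p.1 ∪ p.2).card
      = A.card * (4*k).choose m := by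
  rw [Finset.card_image_of_injOn, Finset.card_product, Finset.card_powersetCard, Nat.card_Icc]
  · norm_num
  · rintro ⟨T1, S1⟩ h1 ⟨T2, S2⟩ h2 h
    simp only [Finset.coe_product, Set.mem_prod, Finset.mem_coe, Finset.mem_powersetCard] at h1 h2
    simp only at h
    have e1 : T1 = T2 := by
      rw [← split_top (hA _ h1.1) h1.2.1, h, split_top (hA _ h2.1) h2.2.1]
    have e2 : S1 = S2 := by
      have split_bot : ∀ {T S' : Finset ℕ}, T ⊆ Finset.Icc (4*k+1) (4*k+7) →
          S' ⊆ Finset.Icc 1 (4*k) → (T ∪ S').filter (fun x => x ≤ 4*k) = S' := by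
        intro T S' hT hS
        ext x
        simp only [Finset.mem_filter, Finset.mem_union]
        constructor
        · rintro ⟨h | h, hx⟩
          · have := Finset.mem_Icc.mp (hT h); omega
          · exact h
        · intro h
          exact ⟨Or.inr h, (Finset.mem_Icc.mp (hS h)).2⟩
      rw [← split_bot (hA _ h1.1) h1.2.1, h, split_bot (hA _ h2.1) h2.2.1]
    simp [e1, e2]
end


def AmFin (k : ℕ) : Finset (Finset ℕ) :=
  (((fanoShift k ×ˢ (Finset.Icc 1 (4*k)).powersetCard (2*k)).image fun p => p.1 ∪ p.2)
  ∪ (((Finset.Icc (4*k+1) (4*k+7)).powersetCard 2 ×ˢ (Finset.Icc 1 (4*k)).powersetCard (2*k+1)).image fun p => p.1 ∪ p.2)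
  ∪ (((Finset.Icc (4*k+1) (4*k+7)).powersetCard 1 ×ˢ (Finset.Icc 1 (4*k)).powersetCard (2*k+2)).image fun p => p.1 ∪ p.2))
  ∪ ((Finset.Icc 1 (4*k)).powersetCard (2*k+3))

lemma topPow_sub {k m : ℕ} : ∀ T ∈ (Finset.Icc (4*k+1) (4*k+7)).powersetCard m,
    T ⊆ Finset.Icc (4*k+1) (4*k+7) := fun _ hT => (Finset.mem_powersetCard.mp hT).1

lemma topPow_card {k m : ℕ} : ∀ T ∈ (Finset.Icc (4*k+1) (4*k+7)).powersetCard m,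
    T.card = m := fun _ hT => (Finset.mem_powersetCard.mp hT).2

lemma AmFin_card_gen (k : ℕ) (F : Finset (Finset ℕ)) (hFc : F.card = 7)
    (hFs : ∀ T ∈ F, T ⊆ Finset.Icc (4*k+1) (4*k+7)) (hF3 : ∀ T ∈ F, T.card = 3) :
    ((((F ×ˢ (Finset.Icc 1 (4*k)).powersetCard (2*k)).image fun p => p.1 ∪ p.2)
      ∪ (((Finset.Icc (4*k+1) (4*k+7)).powersetCard 2 ×ˢ (Finset.Icc 1 (4*k)).powersetCard (2*k+1)).image fun p => p.1 ∪ p.2)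
      ∪ (((Finset.Icc (4*k+1) (4*k+7)).powersetCard 1 ×ˢ (Finset.Icc 1 (4*k)).powersetCard (2*k+2)).image fun p => p.1 ∪ p.2))
      ∪ ((Finset.Icc 1 (4*k)).powersetCard (2*k+3))).card
    = 7 * (4*k).choose (2*k) + 21 * (4*k).choose (2*k+1)
      + 7 * (4*k).choose (2*k+2) + (4*k).choose (2*k+3) := by
  have hIcc : (Finset.Icc (4*k+1) (4*k+7)).card = 7 := by rw [Nat.card_Icc]; omega
  have c1 := part_card (k := k) (m := 2*k) (A := F) hFs
  have c2 := part_card (k := k) (m := 2*k+1) topPow_sub (A := (Finset.Icc (4*k+1) (4*k+7)).powersetCard 2)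
  have c3 := part_card (k := k) (m := 2*k+2) topPow_sub (A := (Finset.Icc (4*k+1) (4*k+7)).powersetCard 1)
  rw [hFc] at c1
  rw [Finset.card_powersetCard, hIcc] at c2 c3
  have f1 : ∀ S ∈ ((F ×ˢ (Finset.Icc 1 (4*k)).powersetCard (2*k)).image fun p => p.1 ∪ p.2),
      (S.filter (fun x => 4*k+1 ≤ x)).card = 3 :=
    fun S h => filter_card_of_mem hFs hF3 h
  have f2 : ∀ S ∈ (((Finset.Icc (4*k+1) (4*k+7)).powersetCard 2 ×ˢ (Finset.Icc 1 (4*k)).powersetCard (2*k+1)).image fun p => p.1 ∪ p.2),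
      (S.filter (fun x => 4*k+1 ≤ x)).card = 2 :=
    fun S h => filter_card_of_mem topPow_sub topPow_card h
  have f3 : ∀ S ∈ (((Finset.Icc (4*k+1) (4*k+7)).powersetCard 1 ×ˢ (Finset.Icc 1 (4*k)).powersetCard (2*k+2)).image fun p => p.1 ∪ p.2),
      (S.filter (fun x => 4*k+1 ≤ x)).card = 1 :=
    fun S h => filter_card_of_mem topPow_sub topPow_card h
  have f4 : ∀ S ∈ (Finset.Icc 1 (4*k)).powersetCard (2*k+3),
      (S.filter (fun x => 4*k+1 ≤ x)).card = 0 :=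
    fun S h => filter_card_bot (Finset.mem_powersetCard.mp h).1
  have d12 : Disjoint ((F ×ˢ (Finset.Icc 1 (4*k)).powersetCard (2*k)).image fun p => p.1 ∪ p.2)
      (((Finset.Icc (4*k+1) (4*k+7)).powersetCard 2 ×ˢ (Finset.Icc 1 (4*k)).powersetCard (2*k+1)).image fun p => p.1 ∪ p.2) :=
    Finset.disjoint_left.mpr fun S h1 h2 => by have := f1 S h1; have := f2 S h2; omega
  have d13 : Disjoint ((F ×ˢ (Finset.Icc 1 (4*k)).powersetCard (2*k)).image fun p => p.1 ∪ p.2)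
      (((Finset.Icc (4*k+1) (4*k+7)).powersetCard 1 ×ˢ (Finset.Icc 1 (4*k)).powersetCard (2*k+2)).image fun p => p.1 ∪ p.2) :=
    Finset.disjoint_left.mpr fun S h1 h2 => by have := f1 S h1; have := f3 S h2; omega
  have d23 : Disjoint (((Finset.Icc (4*k+1) (4*k+7)).powersetCard 2 ×ˢ (Finset.Icc 1 (4*k)).powersetCard (2*k+1)).image fun p => p.1 ∪ p.2)
      (((Finset.Icc (4*k+1) (4*k+7)).powersetCard 1 ×ˢ (Finset.Icc 1 (4*k)).powersetCard (2*k+2)).image fun p => p.1 ∪ p.2) :=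
    Finset.disjoint_left.mpr fun S h1 h2 => by have := f2 S h1; have := f3 S h2; omega
  have d4 : Disjoint ((((F ×ˢ (Finset.Icc 1 (4*k)).powersetCard (2*k)).image fun p => p.1 ∪ p.2)
      ∪ (((Finset.Icc (4*k+1) (4*k+7)).powersetCard 2 ×ˢ (Finset.Icc 1 (4*k)).powersetCard (2*k+1)).image fun p => p.1 ∪ p.2))
      ∪ (((Finset.Icc (4*k+1) (4*k+7)).powersetCard 1 ×ˢ (Finset.Icc 1 (4*k)).powersetCard (2*k+2)).image fun p => p.1 ∪ p.2))
      ((Finset.Icc 1 (4*k)).powersetCard (2*k+3)) :=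
    Finset.disjoint_left.mpr fun S h1 h2 => by
      have h4 := f4 S h2
      rcases Finset.mem_union.mp h1 with h | h
      · rcases Finset.mem_union.mp h with h | h
        · have := f1 S h; omega
        · have := f2 S h; omega
      · have := f3 S h; omega
  rw [Finset.card_union_of_disjoint d4, Finset.card_union_of_disjoint (by
      rw [Finset.disjoint_union_left]; exact ⟨d13, d23⟩),
    Finset.card_union_of_disjoint d12, c1, c2, c3, Finset.card_powersetCard, Nat.card_Icc,
    show Nat.choose 7 2 = 21 from rfl, show Nat.choose 7 1 = 7 from rfl]
  norm_num

lemma AmFin_card (k : ℕ) :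
    (AmFin k).card = 7 * (4*k).choose (2*k) + 21 * (4*k).choose (2*k+1)
      + 7 * (4*k).choose (2*k+2) + (4*k).choose (2*k+3) :=
  AmFin_card_gen k (fanoShift k) (fano_card k) (fun _ h => fano_mem_sub h)
    (fun _ h => fano_mem_card h)

lemma Am_eq (k : ℕ) : Am k = ↑(AmFin k) := by
  ext S
  simp only [Am, AmFin, Set.mem_setOf_eq, Finset.coe_union, Set.mem_union, Finset.mem_coe,
    Finset.mem_image, Finset.mem_product, Finset.mem_powersetCard, Prod.exists]
  constructor
  · rintro (⟨T, hT, S', h1, h2, rfl⟩ | ⟨S', S'', h1, h2, h3, h4, rfl⟩ |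
      ⟨S', S'', h1, h2, h3, h4, rfl⟩ | ⟨h1, h2⟩)
    · exact Or.inl (Or.inl (Or.inl ⟨T, S', ⟨hT, h1, h2⟩, rfl⟩))
    · exact Or.inl (Or.inl (Or.inr ⟨S', S'', ⟨⟨h1, h2⟩, h3, h4⟩, rfl⟩))
    · exact Or.inl (Or.inr ⟨S', S'', ⟨⟨h1, h2⟩, h3, h4⟩, rfl⟩)
    · exact Or.inr ⟨h1, h2⟩
  · rintro ((( ⟨T, S', ⟨hT, h1, h2⟩, rfl⟩ | ⟨S', S'', ⟨⟨h1, h2⟩, h3, h4⟩, rfl⟩) |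
      ⟨S', S'', ⟨⟨h1, h2⟩, h3, h4⟩, rfl⟩) | ⟨h1, h2⟩)
    · exact Or.inl ⟨T, hT, S', h1, h2, rfl⟩
    · exact Or.inr (Or.inl ⟨S', S'', h1, h2, h3, h4, rfl⟩)
    · exact Or.inr (Or.inr (Or.inl ⟨S', S'', h1, h2, h3, h4, rfl⟩))
    · exact Or.inr (Or.inr (Or.inr ⟨h1, h2⟩))

open Filter

lemma aux_tendsto (a b c d : ℝ) (hc : 0 < c) (hd : 0 ≤ d) :
    Tendsto (fun n : ℕ => (a*n+b)/(c*n+d)) atTop (nhds (a/c)) := by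
  have h0 : Tendsto (fun n : ℕ => ((n:ℝ))⁻¹) atTop (nhds 0) :=
    tendsto_inv_atTop_zero.comp tendsto_natCast_atTop_atTop
  have h1 : Tendsto (fun n : ℕ => (a + b*((n:ℝ))⁻¹)/(c + d*((n:ℝ))⁻¹)) atTop
      (nhds ((a + b*0)/(c + d*0))) := by
    refine Filter.Tendsto.div ?_ ?_ (by simpa using hc.ne')
    · exact tendsto_const_nhds.add (tendsto_const_nhds.mul h0)
    · exact tendsto_const_nhds.add (tendsto_const_nhds.mul h0)
  simp only [mul_zero, add_zero] at h1
  refine h1.congr' ?_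
  filter_upwards [eventually_gt_atTop 0] with n hn
  have hn' : (0:ℝ) < n := by exact_mod_cast hn
  have hden : (0:ℝ) < c*n+d := by positivity
  have hden2 : (0:ℝ) < c + d*(n:ℝ)⁻¹ := by positivity
  field_simp

noncomputable def G (k : ℕ) : ℝ :=
  (7 + 21*((2*(k:ℝ))/(2*k+1)) + 7*((2*(k:ℝ))/(2*k+1)*((2*k-1)/(2*k+2)))
    + (2*(k:ℝ))/(2*k+1)*((2*k-1)/(2*k+2))*((2*k-2)/(2*k+3)))
  * ((2*(k:ℝ)+1)/(4*k+1)) * ((2*(k:ℝ)+2)/(4*k+2)) * ((2*(k:ℝ)+1)/(4*k+3))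
  * ((2*(k:ℝ)+2)/(4*k+4)) * ((2*(k:ℝ)+3)/(4*k+5)) * ((2*(k:ℝ)+4)/(4*k+6))

lemma G_tendsto : Tendsto G atTop (nhds (36/64)) := by
  have t1 : Tendsto (fun k : ℕ => (2*(k:ℝ))/(2*k+1)) atTop (nhds 1) := by
    have := aux_tendsto 2 0 2 1 (by norm_num) (by norm_num)
    simpa using this.congr (fun n => by ring_nf)
  have t2 : Tendsto (fun k : ℕ => (2*(k:ℝ)-1)/(2*k+2)) atTop (nhds 1) := by
    have h := aux_tendsto 2 (-1) 2 2 (by norm_num) (by norm_num)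
    norm_num at h
    exact h.congr fun n => by ring_nf
  have t3 : Tendsto (fun k : ℕ => (2*(k:ℝ)-2)/(2*k+3)) atTop (nhds 1) := by
    have h := aux_tendsto 2 (-2) 2 3 (by norm_num) (by norm_num)
    norm_num at h
    exact h.congr fun n => by ring_nf
  have g1 : Tendsto (fun k : ℕ => (2*(k:ℝ)+1)/(4*k+1)) atTop (nhds (2/4)) := by
    have h := aux_tendsto 2 1 4 1 (by norm_num) (by norm_num)
    exact h.congr fun n => by ring_nf
  have g2 : Tendsto (fun k : ℕ => (2*(k:ℝ)+2)/(4*k+2)) atTop (nhds (2/4)) := by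
    have h := aux_tendsto 2 2 4 2 (by norm_num) (by norm_num)
    exact h.congr fun n => by ring_nf
  have g3 : Tendsto (fun k : ℕ => (2*(k:ℝ)+1)/(4*k+3)) atTop (nhds (2/4)) := by
    have h := aux_tendsto 2 1 4 3 (by norm_num) (by norm_num)
    exact h.congr fun n => by ring_nf
  have g4 : Tendsto (fun k : ℕ => (2*(k:ℝ)+2)/(4*k+4)) atTop (nhds (2/4)) := by
    have h := aux_tendsto 2 2 4 4 (by norm_num) (by norm_num)
    exact h.congr fun n => by ring_nf
  have g5 : Tendsto (fun k : ℕ => (2*(k:ℝ)+3)/(4*k+5)) atTop (nhds (2/4)) := by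
    have h := aux_tendsto 2 3 4 5 (by norm_num) (by norm_num)
    exact h.congr fun n => by ring_nf
  have g6 : Tendsto (fun k : ℕ => (2*(k:ℝ)+4)/(4*k+6)) atTop (nhds (2/4)) := by
    have h := aux_tendsto 2 4 4 6 (by norm_num) (by norm_num)
    exact h.congr fun n => by ring_nf
  have main : Tendsto G atTop (nhds
      ((7 + 21*(1:ℝ) + 7*(1*1) + 1*1*1) * (2/4) * (2/4) * (2/4) * (2/4) * (2/4) * (2/4))) := by
    unfold G
    exact ((((((tendsto_const_nhds.add (tendsto_const_nhds.mul t1)).add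
      (tendsto_const_nhds.mul (t1.mul t2))).add ((t1.mul t2).mul t3)).mul g1).mul g2).mul g3).mul g4 |>.mul g5 |>.mul g6
  norm_num at main ⊢
  exact main


lemma ratio_core (x a b c d b1 b2 b3 b4 b5 e : ℝ) (hx : 0 ≤ x)
    (ha : 0 < a) (he : 0 < e)
    (N1 : b * (2*x+5) = a * (2*x+4))
    (N2 : c * (2*x+6) = b * (2*x+3))
    (N3 : d * (2*x+7) = c * (2*x+2))
    (S1 : (4*x+9) * a = b1 * (2*x+5))
    (S2 : (4*x+10) * b1 = b2 * (2*x+6))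
    (S3 : b2 * (4*x+11) = b3 * (2*x+5))
    (S4 : b3 * (4*x+12) = b4 * (2*x+6))
    (S5 : b4 * (4*x+13) = b5 * (2*x+7))
    (S6 : b5 * (4*x+14) = e * (2*x+8)) :
    (7*a + 21*b + 7*c + d) / e =
      (7 + 21*((2*x+4)/(2*x+5)) + 7*((2*x+4)/(2*x+5)*((2*x+3)/(2*x+6)))
        + (2*x+4)/(2*x+5)*((2*x+3)/(2*x+6))*((2*x+2)/(2*x+7)))
      * ((2*x+5)/(4*x+9)) * ((2*x+6)/(4*x+10)) * ((2*x+5)/(4*x+11))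
      * ((2*x+6)/(4*x+12)) * ((2*x+7)/(4*x+13)) * ((2*x+8)/(4*x+14)) := by
  have h5 : (2*x+5) ≠ 0 := by positivity
  have h6 : (2*x+6) ≠ 0 := by positivity
  have h7 : (2*x+7) ≠ 0 := by positivity
  have h8 : (2*x+8) ≠ 0 := by positivity
  have k9 : (4*x+9) ≠ 0 := by positivity
  have k10 : (4*x+10) ≠ 0 := by positivity
  have k11 : (4*x+11) ≠ 0 := by positivity
  have k12 : (4*x+12) ≠ 0 := by positivity
  have k13 : (4*x+13) ≠ 0 := by positivity
  have k14 : (4*x+14) ≠ 0 := by positivity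
  have C2 : c * ((2*x+5)*(2*x+6)) = a * ((2*x+4)*(2*x+3)) := by
    linear_combination (2*x+5)*N2 + (2*x+3)*N1
  have C3 : d * ((2*x+5)*(2*x+6)*(2*x+7)) = a * ((2*x+4)*(2*x+3)*(2*x+2)) := by
    linear_combination (2*x+5)*(2*x+6)*N3 + (2*x+2)*C2
  have E2 : b2 * ((2*x+5)*(2*x+6)) = a * ((4*x+9)*(4*x+10)) := by
    linear_combination -(4*x+10)*S1 - (2*x+5)*S2
  have E3 : b3 * ((2*x+5)*(2*x+6)*(2*x+5)) = a * ((4*x+9)*(4*x+10)*(4*x+11)) := by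
    linear_combination (4*x+11)*E2 - (2*x+5)*(2*x+6)*S3
  have E4 : b4 * ((2*x+5)*(2*x+6)*(2*x+5)*(2*x+6)) = a * ((4*x+9)*(4*x+10)*(4*x+11)*(4*x+12)) := by
    linear_combination (4*x+12)*E3 - (2*x+5)*(2*x+6)*(2*x+5)*S4
  have E5 : b5 * ((2*x+5)*(2*x+6)*(2*x+5)*(2*x+6)*(2*x+7)) = a * ((4*x+9)*(4*x+10)*(4*x+11)*(4*x+12)*(4*x+13)) := by
    linear_combination (4*x+13)*E4 - (2*x+5)*(2*x+6)*(2*x+5)*(2*x+6)*S5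
  have E6 : e * ((2*x+5)*(2*x+6)*(2*x+5)*(2*x+6)*(2*x+7)*(2*x+8)) = a * ((4*x+9)*(4*x+10)*(4*x+11)*(4*x+12)*(4*x+13)*(4*x+14)) := by
    linear_combination (4*x+14)*E5 - (2*x+5)*(2*x+6)*(2*x+5)*(2*x+6)*(2*x+7)*S6
  have hb : b = a * ((2*x+4)/(2*x+5)) := by
    field_simp; linear_combination N1
  have hc : c = a * (((2*x+4)*(2*x+3))/((2*x+5)*(2*x+6))) := by
    field_simp; linear_combination C2
  have hd : d = a * (((2*x+4)*(2*x+3)*(2*x+2))/((2*x+5)*(2*x+6)*(2*x+7))) := by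
    field_simp; linear_combination C3
  have he' : e = a * (((4*x+9)*(4*x+10)*(4*x+11)*(4*x+12)*(4*x+13)*(4*x+14))
      /((2*x+5)*(2*x+6)*(2*x+5)*(2*x+6)*(2*x+7)*(2*x+8))) := by
    field_simp; linear_combination E6
  rw [hb, hc, hd, he']
  field_simp

lemma ratio_id (k : ℕ) (hk : 2 ≤ k) :
    (7 * ((4*k).choose (2*k) : ℝ) + 21 * ((4*k).choose (2*k+1) : ℝ)
      + 7 * ((4*k).choose (2*k+2) : ℝ) + ((4*k).choose (2*k+3) : ℝ))
      / ((4*k+6).choose (2*k+2) : ℝ) = G k := by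
  obtain ⟨m, rfl⟩ : ∃ m, k = m + 2 := ⟨k - 2, by omega⟩
  have N1 := Nat.choose_succ_right_eq (4*m+8) (2*m+4)
  have N2 := Nat.choose_succ_right_eq (4*m+8) (2*m+5)
  have N3 := Nat.choose_succ_right_eq (4*m+8) (2*m+6)
  rw [show 4*m+8 - (2*m+4) = 2*m+4 from by omega] at N1
  rw [show 4*m+8 - (2*m+5) = 2*m+3 from by omega] at N2
  rw [show 4*m+8 - (2*m+6) = 2*m+2 from by omega] at N3
  have S1 := Nat.add_one_mul_choose_eq (4*m+8) (2*m+4)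
  have S2 := Nat.add_one_mul_choose_eq (4*m+9) (2*m+5)
  have S3 := Nat.choose_mul_succ_eq (4*m+10) (2*m+6)
  have S4 := Nat.choose_mul_succ_eq (4*m+11) (2*m+6)
  have S5 := Nat.choose_mul_succ_eq (4*m+12) (2*m+6)
  have S6 := Nat.choose_mul_succ_eq (4*m+13) (2*m+6)
  rw [show 4*m+10+1 - (2*m+6) = 2*m+5 from by omega] at S3
  rw [show 4*m+11+1 - (2*m+6) = 2*m+6 from by omega] at S4
  rw [show 4*m+12+1 - (2*m+6) = 2*m+7 from by omega] at S5
  rw [show 4*m+13+1 - (2*m+6) = 2*m+8 from by omega] at S6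
  have N1' : ((4*m+8).choose (2*m+5) : ℝ) * (2*(m:ℝ)+5) = ((4*m+8).choose (2*m+4) : ℝ) * (2*(m:ℝ)+4) := by
    exact_mod_cast congrArg (Nat.cast : ℕ → ℝ) N1
  have N2' : ((4*m+8).choose (2*m+6) : ℝ) * (2*(m:ℝ)+6) = ((4*m+8).choose (2*m+5) : ℝ) * (2*(m:ℝ)+3) := by
    exact_mod_cast congrArg (Nat.cast : ℕ → ℝ) N2
  have N3' : ((4*m+8).choose (2*m+7) : ℝ) * (2*(m:ℝ)+7) = ((4*m+8).choose (2*m+6) : ℝ) * (2*(m:ℝ)+2) := by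
    exact_mod_cast congrArg (Nat.cast : ℕ → ℝ) N3
  have S1' : (4*(m:ℝ)+9) * ((4*m+8).choose (2*m+4) : ℝ) = ((4*m+9).choose (2*m+5) : ℝ) * (2*(m:ℝ)+5) := by
    exact_mod_cast congrArg (Nat.cast : ℕ → ℝ) S1
  have S2' : (4*(m:ℝ)+10) * ((4*m+9).choose (2*m+5) : ℝ) = ((4*m+10).choose (2*m+6) : ℝ) * (2*(m:ℝ)+6) := by
    exact_mod_cast congrArg (Nat.cast : ℕ → ℝ) S2
  have S3' : ((4*m+10).choose (2*m+6) : ℝ) * (4*(m:ℝ)+11) = ((4*m+11).choose (2*m+6) : ℝ) * (2*(m:ℝ)+5) := by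
    exact_mod_cast congrArg (Nat.cast : ℕ → ℝ) S3
  have S4' : ((4*m+11).choose (2*m+6) : ℝ) * (4*(m:ℝ)+12) = ((4*m+12).choose (2*m+6) : ℝ) * (2*(m:ℝ)+6) := by
    exact_mod_cast congrArg (Nat.cast : ℕ → ℝ) S4
  have S5' : ((4*m+12).choose (2*m+6) : ℝ) * (4*(m:ℝ)+13) = ((4*m+13).choose (2*m+6) : ℝ) * (2*(m:ℝ)+7) := by
    exact_mod_cast congrArg (Nat.cast : ℕ → ℝ) S5
  have S6' : ((4*m+13).choose (2*m+6) : ℝ) * (4*(m:ℝ)+14) = ((4*m+14).choose (2*m+6) : ℝ) * (2*(m:ℝ)+8) := by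
    exact_mod_cast congrArg (Nat.cast : ℕ → ℝ) S6
  have ha : (0:ℝ) < ((4*m+8).choose (2*m+4) : ℝ) := by
    exact_mod_cast Nat.choose_pos (by omega)
  have hepos : (0:ℝ) < ((4*m+14).choose (2*m+6) : ℝ) := by
    exact_mod_cast Nat.choose_pos (by omega)
  have core := ratio_core (m:ℝ) _ _ _ _ _ _ _ _ _ _ (Nat.cast_nonneg m) ha hepos
    N1' N2' N3' S1' S2' S3' S4' S5' S6'
  rw [show 4*(m+2) = 4*m+8 from by ring, show 2*(m+2) = 2*m+4 from by ring,
    show 2*m+4+1 = 2*m+5 from by ring, show 2*m+4+2 = 2*m+6 from by ring,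
    show 2*m+4+3 = 2*m+7 from by ring, show 4*m+8+6 = 4*m+14 from by ring]
  rw [core]
  unfold G
  push_cast
  ring

theorem Am_card_and_ratio :
    (∀ k : ℕ, 2 ≤ k →
      (Am k).ncard = 7 * (4*k).choose (2*k) + 21 * (4*k).choose (2*k+1)
        + 7 * (4*k).choose (2*k+2) + (4*k).choose (2*k+3)) ∧
    Filter.Tendsto
      (fun k : ℕ => ((Am k).ncard : ℝ) / ((4*k+6).choose (2*k+2) : ℝ))
      Filter.atTop (nhds (36 / 64)) := by
  have hcard : ∀ k : ℕ, (Am k).ncard = 7 * (4*k).choose (2*k) + 21 * (4*k).choose (2*k+1)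
      + 7 * (4*k).choose (2*k+2) + (4*k).choose (2*k+3) := fun k => by
    rw [Am_eq, Set.ncard_coe_finset, AmFin_card]
  refine ⟨fun k _ => hcard k, ?_⟩
  have hev : (fun k : ℕ => ((Am k).ncard : ℝ) / ((4*k+6).choose (2*k+2) : ℝ))
      =ᶠ[Filter.atTop] G := by
    filter_upwards [Filter.eventually_ge_atTop 2] with k hk
    rw [hcard k]
    push_cast
    exact ratio_id k hk
  exact G_tendsto.congr' hev.symm
end

section
/- Let k ≥ 2 and n = 4k+7. With Cone and D the two maximal intersecting algebraic systems constructed from the Fano-based family A_m, one has |D| - |Cone| = C(4k, 2k-2) + 6·C(4k, 2k-1) > 0; in particular |Cone| < |D|. -/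
def Dfam (k : ℕ) : Set (Finset ℕ) :=
  {S | S ⊆ Finset.Icc 1 (4*k+7) ∧ (S ∈ Am k ∨ (Odd S.card ∧ 2*k+5 ≤ S.card))}

/-- The maximal commutative algebraic system
`Cone = Cone(Cone_{2k+1} ∪ Cone_{2k+3})`, described explicitly via its layers:
size `2k+1` subsets of `[4k]`, the family `A_m` at size `2k+3`, the size `2k+5`
sets meeting `{4k+1,…,4k+7}` in at most `5` elements, and all odd sets of size
`≥ 2k+7`. -/
def ConeFam (k : ℕ) : Set (Finset ℕ) :=
  {S | S ⊆ Finset.Icc 1 (4*k+7) ∧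
    ((S ⊆ Finset.Icc 1 (4*k) ∧ S.card = 2*k+1)
      ∨ S ∈ Am k
      ∨ (S.card = 2*k+5 ∧ (S ∩ Finset.Icc (4*k+1) (4*k+7)).card ≤ 5)
      ∨ (Odd S.card ∧ 2*k+7 ≤ S.card))}

private lemma card_triple {a b c : ℕ} (h1 : a ≠ b) (h2 : a ≠ c) (h3 : b ≠ c) :
    ({a, b, c} : Finset ℕ).card = 3 := by
  rw [Finset.card_insert_of_notMem (by simp [h1, h2]),
      Finset.card_insert_of_notMem (by simp [h3]), Finset.card_singleton]

private lemma fanoShift_mem {k : ℕ} {T : Finset ℕ} (hT : T ∈ fanoShift k) :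
    T ⊆ Finset.Icc (4*k+1) (4*k+7) ∧ T.card = 3 := by
  simp only [fanoShift, Finset.mem_insert, Finset.mem_singleton] at hT
  rcases hT with h|h|h|h|h|h|h <;> subst h <;>
    refine ⟨?_, card_triple (by omega) (by omega) (by omega)⟩ <;>
    · intro x hx
      simp only [Finset.mem_insert, Finset.mem_singleton] at hx
      simp only [Finset.mem_Icc]
      omega

private lemma disjointIJ (k : ℕ) :
    Disjoint (Finset.Icc 1 (4*k)) (Finset.Icc (4*k+1) (4*k+7)) := by
  simp only [Finset.disjoint_left, Finset.mem_Icc]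
  omega

private lemma union_ci {k : ℕ} {A B : Finset ℕ}
    (hA : A ⊆ Finset.Icc (4*k+1) (4*k+7)) (hB : B ⊆ Finset.Icc 1 (4*k)) :
    (A ∪ B).card = A.card + B.card ∧ A ∪ B ⊆ Finset.Icc 1 (4*k+7) := by
  constructor
  · exact Finset.card_union_of_disjoint (((disjointIJ k).symm.mono hA hB))
  · apply Finset.union_subset
    · exact hA.trans (Finset.Icc_subset_Icc (by omega) le_rfl)
    · exact hB.trans (Finset.Icc_subset_Icc le_rfl (by omega))

private lemma Am_card {k : ℕ} {S : Finset ℕ} (hS : S ∈ Am k) :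
    S.card = 2*k+3 ∧ S ⊆ Finset.Icc 1 (4*k+7) := by
  rcases hS with ⟨T, hT, S', hS'sub, hS'card, rfl⟩ |
    ⟨S', S'', h1, h2, h3, h4, rfl⟩ | ⟨S', S'', h1, h2, h3, h4, rfl⟩ | ⟨h1, h2⟩
  · obtain ⟨hTsub, hTcard⟩ := fanoShift_mem hT
    obtain ⟨hc, hs⟩ := union_ci hTsub hS'sub
    exact ⟨by omega, hs⟩
  · obtain ⟨hc, hs⟩ := union_ci h1 h3
    exact ⟨by omega, hs⟩
  · obtain ⟨hc, hs⟩ := union_ci h1 h3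
    exact ⟨by omega, hs⟩
  · exact ⟨h2, h1.trans (Finset.Icc_subset_Icc le_rfl (by omega))⟩

private lemma countE1 (k : ℕ) :
    {S : Finset ℕ | S ⊆ Finset.Icc 1 (4*k) ∧ S.card = 2*k+1}.ncard
      = (4*k).choose (2*k+1) := by
  have : {S : Finset ℕ | S ⊆ Finset.Icc 1 (4*k) ∧ S.card = 2*k+1}
      = ↑((Finset.Icc 1 (4*k)).powersetCard (2*k+1)) := by
    ext S; simp [Finset.mem_powersetCard]
  rw [this, Set.ncard_coe_finset, Finset.card_powersetCard, Nat.card_Icc]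
  norm_num

private lemma countE2a (k : ℕ) (hk : 2 ≤ k) :
    {S : Finset ℕ | S ⊆ Finset.Icc 1 (4*k+7) ∧ S.card = 2*k+5 ∧
        (S ∩ Finset.Icc (4*k+1) (4*k+7)).card = 7}.ncard
      = (4*k).choose (2*k-2) := by
  have hJcard : (Finset.Icc (4*k+1) (4*k+7)).card = 7 := by rw [Nat.card_Icc]; omega
  have hIcard : (Finset.Icc 1 (4*k)).card = 4*k := by rw [Nat.card_Icc]; omega
  set I := Finset.Icc 1 (4*k) with hI
  set J := Finset.Icc (4*k+1) (4*k+7) with hJ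
  have himg : {S : Finset ℕ | S ⊆ Finset.Icc 1 (4*k+7) ∧ S.card = 2*k+5 ∧ (S ∩ J).card = 7}
      = (fun S'' => J ∪ S'') '' ↑(I.powersetCard (2*k-2)) := by
    ext S
    simp only [Set.mem_setOf_eq, Set.mem_image, Finset.mem_coe, Finset.mem_powersetCard]
    constructor
    · rintro ⟨h1, h2, h3⟩
      have hJS : J ⊆ S := by
        have : S ∩ J = J :=
          Finset.eq_of_subset_of_card_le Finset.inter_subset_right (by omega)
        rw [← this]; exact Finset.inter_subset_left
      refine ⟨S \ J, ⟨?_, ?_⟩, ?_⟩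
      · intro x hx
        rw [Finset.mem_sdiff] at hx
        have h1x := h1 hx.1
        have h2x := hx.2
        simp only [Finset.mem_Icc, hJ, hI] at *
        omega
      · rw [Finset.card_sdiff_of_subset hJS, hJcard]; omega
      · exact Finset.union_sdiff_of_subset hJS
    · rintro ⟨S'', ⟨hsub, hcard⟩, rfl⟩
      obtain ⟨hc, hs⟩ := union_ci (le_refl J) hsub
      have hint : (J ∪ S'') ∩ J = J := by
        rw [Finset.union_inter_distrib_right, Finset.inter_self]
        exact Finset.union_eq_left.2 Finset.inter_subset_right
      exact ⟨hs, by omega, by rw [hint, hJcard]⟩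
  have hinj : Set.InjOn (fun S'' => J ∪ S'') ↑(I.powersetCard (2*k-2)) := by
    intro a ha b hb hab
    simp only [Finset.mem_coe, Finset.mem_powersetCard] at ha hb
    have hab' : J ∪ a = J ∪ b := hab
    have hda : Disjoint J a := (disjointIJ k).symm.mono_right ha.1
    have hdb : Disjoint J b := (disjointIJ k).symm.mono_right hb.1
    have h := congrArg (fun t => t \ J) hab'
    simpa [Finset.union_sdiff_cancel_left hda, Finset.union_sdiff_cancel_left hdb] using h
  rw [himg, Set.ncard_image_of_injOn hinj, Set.ncard_coe_finset,
    Finset.card_powersetCard, hIcard]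

private lemma countE2b (k : ℕ) (hk : 2 ≤ k) :
    {S : Finset ℕ | S ⊆ Finset.Icc 1 (4*k+7) ∧ S.card = 2*k+5 ∧
        (S ∩ Finset.Icc (4*k+1) (4*k+7)).card = 6}.ncard
      = 7 * (4*k).choose (2*k-1) := by
  have hJcard : (Finset.Icc (4*k+1) (4*k+7)).card = 7 := by rw [Nat.card_Icc]; omega
  have hIcard : (Finset.Icc 1 (4*k)).card = 4*k := by rw [Nat.card_Icc]; omega
  set I := Finset.Icc 1 (4*k) with hI
  set J := Finset.Icc (4*k+1) (4*k+7) with hJ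
  have hIJ : Finset.Icc 1 (4*k+7) = I ∪ J := by
    ext x; simp only [Finset.mem_Icc, Finset.mem_union, hI, hJ]; omega
  have keyJ : ∀ A B : Finset ℕ, A ⊆ J → B ⊆ I → (A ∪ B) ∩ J = A := by
    intro A B hA hB
    rw [Finset.union_inter_distrib_right, Finset.inter_eq_left.2 hA,
      Finset.disjoint_iff_inter_eq_empty.1 ((disjointIJ k).mono_left hB),
      Finset.union_empty]
  have keyI : ∀ A B : Finset ℕ, A ⊆ J → B ⊆ I → (A ∪ B) ∩ I = B := by
    intro A B hA hB
    rw [Finset.union_inter_distrib_right, Finset.inter_eq_left.2 hB,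
      Finset.disjoint_iff_inter_eq_empty.1 ((disjointIJ k).symm.mono_left hA),
      Finset.empty_union]
  have himg : {S : Finset ℕ | S ⊆ Finset.Icc 1 (4*k+7) ∧ S.card = 2*k+5 ∧ (S ∩ J).card = 6}
      = (fun p : Finset ℕ × Finset ℕ => p.1 ∪ p.2) ''
        ↑(J.powersetCard 6 ×ˢ I.powersetCard (2*k-1)) := by
    ext S
    simp only [Set.mem_setOf_eq, Set.mem_image, Finset.mem_coe,
      Finset.mem_product, Finset.mem_powersetCard]
    constructor
    · rintro ⟨h1, h2, h3⟩
      have hSsplit : S = (S ∩ I) ∪ (S ∩ J) := by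
        rw [← Finset.inter_union_distrib_left, ← hIJ, Finset.inter_eq_left.2 h1]
      have hcards : S.card = (S ∩ I).card + (S ∩ J).card := by
        conv_lhs => rw [hSsplit]
        exact Finset.card_union_of_disjoint
          ((disjointIJ k).mono Finset.inter_subset_right Finset.inter_subset_right)
      have hx : (S ∩ I).card = 2*k-1 := by omega
      exact ⟨(S ∩ J, S ∩ I), ⟨⟨Finset.inter_subset_right, h3⟩,
        ⟨Finset.inter_subset_right, hx⟩⟩,
        ((hSsplit.trans (Finset.union_comm _ _)).symm)⟩
    · rintro ⟨⟨A, B⟩, ⟨⟨hA, hAc⟩, ⟨hB, hBc⟩⟩, rfl⟩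
      obtain ⟨hc, hs⟩ := union_ci hA hB
      exact ⟨hs, by omega, by rw [keyJ A B hA hB, hAc]⟩
  have hinj : Set.InjOn (fun p : Finset ℕ × Finset ℕ => p.1 ∪ p.2)
      ↑(J.powersetCard 6 ×ˢ I.powersetCard (2*k-1)) := by
    rintro ⟨a1, a2⟩ ha ⟨b1, b2⟩ hb hab
    simp only [Finset.mem_coe, Finset.mem_product, Finset.mem_powersetCard] at ha hb
    have hab' : a1 ∪ a2 = b1 ∪ b2 := hab
    have e1 : a1 = b1 := by
      rw [← keyJ a1 a2 ha.1.1 ha.2.1, ← keyJ b1 b2 hb.1.1 hb.2.1, hab']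
    have e2 : a2 = b2 := by
      rw [← keyI a1 a2 ha.1.1 ha.2.1, ← keyI b1 b2 hb.1.1 hb.2.1, hab']
    simp [e1, e2]
  rw [himg, Set.ncard_image_of_injOn hinj, Set.ncard_coe_finset,
    Finset.card_product, Finset.card_powersetCard, Finset.card_powersetCard,
    hIcard, hJcard]
  norm_num

theorem cone_smaller_than_D (k : ℕ) (hk : 2 ≤ k) :
    (Dfam k).ncard - (ConeFam k).ncard
      = (4*k).choose (2*k-2) + 6 * (4*k).choose (2*k-1) ∧
    (ConeFam k).ncard < (Dfam k).ncard := by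
  have hJcard : (Finset.Icc (4*k+1) (4*k+7)).card = 7 := by rw [Nat.card_Icc]; omega
  have hinterJ : ∀ S : Finset ℕ, (S ∩ Finset.Icc (4*k+1) (4*k+7)).card ≤ 7 := fun S => by
    calc (S ∩ Finset.Icc (4*k+1) (4*k+7)).card
        ≤ (Finset.Icc (4*k+1) (4*k+7)).card := Finset.card_le_card Finset.inter_subset_right
    _ = 7 := hJcard
  -- C \ D = E1
  have hCD : ConeFam k \ Dfam k
      = {S : Finset ℕ | S ⊆ Finset.Icc 1 (4*k) ∧ S.card = 2*k+1} := by
    ext S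
    constructor
    · rintro ⟨⟨hsub, hC⟩, hnD⟩
      rcases hC with h | h | ⟨h1, h2⟩ | ⟨h1, h2⟩
      · exact h
      · exact absurd ⟨hsub, Or.inl h⟩ hnD
      · exact absurd ⟨hsub, Or.inr ⟨⟨k+2, by omega⟩, by omega⟩⟩ hnD
      · exact absurd ⟨hsub, Or.inr ⟨h1, by omega⟩⟩ hnD
    · rintro ⟨h1, h2⟩
      refine ⟨⟨h1.trans (Finset.Icc_subset_Icc le_rfl (by omega)), Or.inl ⟨h1, h2⟩⟩, ?_⟩
      rintro ⟨-, hAm | ⟨-, hge⟩⟩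
      · have := (Am_card hAm).1; omega
      · omega
  -- D \ C = E2a ∪ E2b
  have hDC : Dfam k \ ConeFam k
      = {S : Finset ℕ | S ⊆ Finset.Icc 1 (4*k+7) ∧ S.card = 2*k+5 ∧
            (S ∩ Finset.Icc (4*k+1) (4*k+7)).card = 7}
        ∪ {S : Finset ℕ | S ⊆ Finset.Icc 1 (4*k+7) ∧ S.card = 2*k+5 ∧
            (S ∩ Finset.Icc (4*k+1) (4*k+7)).card = 6} := by
    ext S
    constructor
    · rintro ⟨⟨hsub, hD⟩, hnC⟩
      rcases hD with hAm | ⟨⟨m, hm⟩, hge⟩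
      · exact absurd ⟨hsub, Or.inr (Or.inl hAm)⟩ hnC
      · have h7 : ¬ (Odd S.card ∧ 2*k+7 ≤ S.card) := fun h =>
          hnC ⟨hsub, Or.inr (Or.inr (Or.inr h))⟩
        have hlt : S.card < 2*k+7 := by
          by_contra h; exact h7 ⟨⟨m, hm⟩, by omega⟩
        have hcard : S.card = 2*k+5 := by omega
        have h5 : ¬ (S.card = 2*k+5 ∧ (S ∩ Finset.Icc (4*k+1) (4*k+7)).card ≤ 5) := fun h =>
          hnC ⟨hsub, Or.inr (Or.inr (Or.inl h))⟩
        have h6 : 6 ≤ (S ∩ Finset.Icc (4*k+1) (4*k+7)).card := by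
          by_contra h; exact h5 ⟨hcard, by omega⟩
        have := hinterJ S
        rcases Nat.eq_or_lt_of_le h6 with h | h
        · exact Or.inr ⟨hsub, hcard, h.symm⟩
        · exact Or.inl ⟨hsub, hcard, by omega⟩
    · intro hS
      have h : S ⊆ Finset.Icc 1 (4*k+7) ∧ S.card = 2*k+5 ∧
          6 ≤ (S ∩ Finset.Icc (4*k+1) (4*k+7)).card := by
        rcases hS with ⟨h1, h2, h3⟩ | ⟨h1, h2, h3⟩ <;> exact ⟨h1, h2, by omega⟩
      obtain ⟨h1, h2, h3⟩ := h
      refine ⟨⟨h1, Or.inr ⟨⟨k+2, by omega⟩, by omega⟩⟩, ?_⟩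
      rintro ⟨-, ⟨-, hc⟩ | hAm | ⟨-, hle⟩ | ⟨-, hge⟩⟩
      · omega
      · have := (Am_card hAm).1; omega
      · omega
      · omega
  -- finiteness
  have hfin : ∀ (X : Set (Finset ℕ)), (∀ S ∈ X, S ⊆ Finset.Icc 1 (4*k+7)) → X.Finite :=
    fun X hX => Set.Finite.subset (Finset.Icc 1 (4*k+7)).powerset.finite_toSet
      (fun S hS => Finset.mem_coe.mpr (Finset.mem_powerset.mpr (hX S hS)))
  have hfinD : (Dfam k).Finite := hfin _ (fun S hS => hS.1)
  have hfinC : (ConeFam k).Finite := hfin _ (fun S hS => hS.1)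
  have hfinE2a := hfin _ (fun S (hS : S ∈ {S : Finset ℕ | S ⊆ Finset.Icc 1 (4*k+7) ∧
      S.card = 2*k+5 ∧ (S ∩ Finset.Icc (4*k+1) (4*k+7)).card = 7}) => hS.1)
  have hfinE2b := hfin _ (fun S (hS : S ∈ {S : Finset ℕ | S ⊆ Finset.Icc 1 (4*k+7) ∧
      S.card = 2*k+5 ∧ (S ∩ Finset.Icc (4*k+1) (4*k+7)).card = 6}) => hS.1)
  have hdisj : Disjoint
      {S : Finset ℕ | S ⊆ Finset.Icc 1 (4*k+7) ∧ S.card = 2*k+5 ∧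
        (S ∩ Finset.Icc (4*k+1) (4*k+7)).card = 7}
      {S : Finset ℕ | S ⊆ Finset.Icc 1 (4*k+7) ∧ S.card = 2*k+5 ∧
        (S ∩ Finset.Icc (4*k+1) (4*k+7)).card = 6} := by
    rw [Set.disjoint_left]
    rintro S ⟨-, -, h7⟩ ⟨-, -, h6⟩
    omega
  -- assemble
  have h1 := Set.ncard_inter_add_ncard_diff_eq_ncard (Dfam k) (ConeFam k) hfinD
  have h2 := Set.ncard_inter_add_ncard_diff_eq_ncard (ConeFam k) (Dfam k) hfinC
  rw [Set.inter_comm] at h2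
  have hsymm : (4*k).choose (2*k+1) = (4*k).choose (2*k-1) := by
    rw [← Nat.choose_symm (show 2*k+1 ≤ 4*k by omega)]
    congr 1; omega
  have e2 : (Dfam k \ ConeFam k).ncard
      = (4*k).choose (2*k-2) + 7 * (4*k).choose (2*k-1) := by
    rw [hDC, Set.ncard_union_eq hdisj hfinE2a hfinE2b, countE2a k hk, countE2b k hk]
  have e1 : (ConeFam k \ Dfam k).ncard = (4*k).choose (2*k-1) := by
    rw [hCD, countE1 k, hsymm]
  have hpos : 0 < (4*k).choose (2*k-2) := Nat.choose_pos (by omega)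
  omega
end
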